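/- arXiv:1208.6581 — 2 statements merged into one kernel-verified Lean document; each statement's English description precedes it below -/
import Mathlib

section
/- For Φ ∈ (0, 2π/3], the clustering coefficient of the circle model with uniform window satisfies ⟨C⟩ = (p/(πΦ²))·[Φ³ + 2∑_{n=1}^{∞} sin³(nΦ)/n³] = 3p/4. That is, the sum Φ³ + 2∑_{n=1}^{∞} sin³(nΦ)/n³ equals (3/4)πΦ² for all Φ in this range. -/
/-!
Writing `sin³ x = (3 sin x - sin 3x) / 4` splits the series into two copies of
`∑ sin(nθ)/n³`, at `θ = Φ` and `θ = 3Φ`. For `θ ∈ [0, 2π]` that series is the Fourier series of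
the third Bernoulli polynomial, `π²θ/6 - πθ²/4 + θ³/12`; the bound `Φ ≤ 2π/3` keeps `3Φ` in
this range. In `3 f(Φ) - f(3Φ)` the linear and cubic terms cancel, leaving `(3/8)πΦ² - Φ³/2`.
-/

open Real

theorem bernoulliFun_three (x : ℝ) : bernoulliFun 3 x = x ^ 3 - 3 / 2 * x ^ 2 + 1 / 2 * x := by
  norm_num [bernoulliFun, Polynomial.bernoulli_def, Finset.sum_range_succ, bernoulli,
    bernoulli'_three]
  ring

theorem hasSum_sin_succ_mul_div_cube {θ : ℝ} (hθ : θ ∈ Set.Icc 0 (2 * π)) :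
    HasSum (fun n : ℕ => sin ((n + 1) * θ) / ((n : ℝ) + 1) ^ 3)
      (π ^ 2 * θ / 6 - π * θ ^ 2 / 4 + θ ^ 3 / 12) := by
  have h2π : 0 < 2 * π := by positivity
  obtain ⟨x, rfl⟩ : ∃ x, θ = 2 * π * x := ⟨θ / (2 * π), by field_simp⟩
  have hx01 : x ∈ Set.Icc (0 : ℝ) 1 :=
    ⟨(mul_nonneg_iff_of_pos_left h2π).mp hθ.1, le_of_mul_le_mul_left (by linarith [hθ.2]) h2π⟩
  have hsum := (hasSum_nat_add_iff' 1).mpr (hasSum_one_div_nat_pow_mul_sin one_ne_zero hx01)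
  rw [← bernoulliFun] at hsum
  norm_num [bernoulliFun_three, Nat.factorial] at hsum
  rw [show π ^ 2 * (2 * π * x) / 6 - π * (2 * π * x) ^ 2 / 4 + (2 * π * x) ^ 3 / 12
      = (2 * π) ^ 3 / 2 / 6 * (x ^ 3 - 3 / 2 * x ^ 2 + 1 / 2 * x) by ring]
  refine hsum.congr_fun fun n => ?_
  rw [show ((n : ℝ) + 1) * (2 * π * x) = 2 * π * (n + 1) * x by ring]
  ring

theorem sin_pow_three (x : ℝ) : sin x ^ 3 = (3 * sin x - sin (3 * x)) / 4 := by
  rw [sin_three_mul]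
  ring

theorem hasSum_sin_succ_mul_pow_three_div_cube {θ : ℝ} (h0 : 0 ≤ θ) (hθ : θ ≤ 2 * π / 3) :
    HasSum (fun n : ℕ => sin ((n + 1) * θ) ^ 3 / ((n : ℝ) + 1) ^ 3)
      (3 / 8 * π * θ ^ 2 - θ ^ 3 / 2) := by
  have hπ := pi_pos
  have h1 := hasSum_sin_succ_mul_div_cube (θ := θ) ⟨h0, by linarith⟩
  have h3 := hasSum_sin_succ_mul_div_cube (θ := 3 * θ) ⟨by linarith, by linarith⟩
  rw [show 3 / 8 * π * θ ^ 2 - θ ^ 3 / 2 = (3 * (π ^ 2 * θ / 6 - π * θ ^ 2 / 4 + θ ^ 3 / 12) -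
      (π ^ 2 * (3 * θ) / 6 - π * (3 * θ) ^ 2 / 4 + (3 * θ) ^ 3 / 12)) / 4 by ring]
  refine (((h1.mul_left 3).sub h3).div_const 4).congr_fun fun n => ?_
  rw [sin_pow_three, show 3 * ((n + 1) * θ) = (n + 1) * (3 * θ) by ring]
  ring

theorem clustering_coefficient_three_quarters_general
    (p Φ : ℝ) (hΦ0 : 0 < Φ) (hΦ : Φ ≤ 2 * π / 3) :
    Φ ^ 3 + 2 * ∑' n : ℕ, Real.sin ((n + 1) * Φ) ^ 3 / ((n : ℝ) + 1) ^ 3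
        = (3 / 4) * π * Φ ^ 2 ∧
    (p / (π * Φ ^ 2)) *
        (Φ ^ 3 + 2 * ∑' n : ℕ, Real.sin ((n + 1) * Φ) ^ 3 / ((n : ℝ) + 1) ^ 3)
      = 3 * p / 4 := by
  have hsum : Φ ^ 3 + 2 * ∑' n : ℕ, Real.sin ((n + 1) * Φ) ^ 3 / ((n : ℝ) + 1) ^ 3
      = (3 / 4) * π * Φ ^ 2 := by
    rw [(hasSum_sin_succ_mul_pow_three_div_cube hΦ0.le hΦ).tsum_eq]
    ring
  refine ⟨hsum, ?_⟩
  have : π * Φ ^ 2 ≠ 0 := by positivity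
  rw [hsum]
  field_simp

/-- For `Φ ∈ (0, 2π/3]`, `Φ³ + 2∑_{n≥1} sin³(nΦ)/n³ = (3/4)πΦ²`, hence the
clustering coefficient equals `3p/4`. -/
theorem clustering_coefficient_three_quarters
    (p Φ : ℝ) (hp0 : 0 ≤ p) (hp1 : p ≤ 1) (hΦ0 : 0 < Φ) (hΦ : Φ ≤ 2 * π / 3) :
    Φ ^ 3 + 2 * ∑' n : ℕ, Real.sin ((n + 1) * Φ) ^ 3 / ((n : ℝ) + 1) ^ 3
        = (3 / 4) * π * Φ ^ 2 ∧
    (p / (π * Φ ^ 2)) *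
        (Φ ^ 3 + 2 * ∑' n : ℕ, Real.sin ((n + 1) * Φ) ^ 3 / ((n : ℝ) + 1) ^ 3)
      = 3 * p / 4 :=
  clustering_coefficient_three_quarters_general p Φ hΦ0 hΦ
end

section
/- For Φ ∈ (0, π/2] and b with 2Φ < |b| ≤ π, one has (pΦ/π)² + 2∑_{n=1}^{∞} (p sin(nΦ)/(πn))² cos(nb) = 0; i.e., the Fourier series of the self-convolution of the window function vanishes outside the support [−2Φ, 2Φ]. -/
/-!
Since `sin²(nΦ) cos(nb) = cos(nb)/2 - cos(n(b+2Φ))/4 - cos(n(b-2Φ))/4` and, on `[0, 2π]`,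
`∑_{n≥1} cos(ny)/n² = π²/6 - πy/2 + y²/4` (a multiple of the Bernoulli polynomial `B₂`), the series
is a second difference of this quadratic as long as `|b| ± 2Φ ∈ [0, 2π]`. Its linear part cancels
and its quadratic part leaves `∑ sin²(nΦ) cos(nb)/n² = -Φ²/2`, which cancels `(pΦ/π)²`.
-/

open Real

-- The `n = 0` term is `cos 0 / 0 = 0`.
theorem hasSum_cos_nat_mul_div_sq {y : ℝ} (hy0 : 0 ≤ y) (hy : y ≤ 2 * π) :
    HasSum (fun n : ℕ => cos (n * y) / n ^ 2) (π ^ 2 / 6 - π * y / 2 + y ^ 2 / 4) := by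
  have hx : y / (2 * π) ∈ Set.Icc (0 : ℝ) 1 :=
    ⟨by positivity, (div_le_one (by positivity)).mpr hy⟩
  convert hasSum_one_div_nat_pow_mul_cos one_ne_zero hx using 1
  · ext n
    field_simp
    norm_num
  · change _ = _ * bernoulliFun 2 _
    rw [bernoulliFun_two]
    field_simp
    ring

theorem sin_sq_mul_cos (a c : ℝ) :
    sin a ^ 2 * cos c = cos c / 2 - cos (c + 2 * a) / 4 - cos (c - 2 * a) / 4 := by
  rw [cos_add, cos_sub, cos_two_mul, cos_sq']
  ring

theorem hasSum_sin_sq_mul_cos_nat_mul_div_sq {Φ y : ℝ} (hΦ : 0 ≤ Φ) (h2Φ : 2 * Φ ≤ y)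
    (hy : y + 2 * Φ ≤ 2 * π) :
    HasSum (fun n : ℕ => sin (n * Φ) ^ 2 * cos (n * y) / n ^ 2) (-(Φ ^ 2 / 2)) := by
  have hy_mid := hasSum_cos_nat_mul_div_sq (y := y) (by linarith) (by linarith)
  have hy_add := hasSum_cos_nat_mul_div_sq (y := y + 2 * Φ) (by linarith) hy
  have hy_sub := hasSum_cos_nat_mul_div_sq (y := y - 2 * Φ) (by linarith) (by linarith)
  convert! (hy_mid.div_const 2).sub ((hy_add.div_const 4).add (hy_sub.div_const 4)) using 1
  · ext n
    rw [sin_sq_mul_cos, show (n : ℝ) * (y + 2 * Φ) = n * y + 2 * (n * Φ) by ring,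
      show (n : ℝ) * (y - 2 * Φ) = n * y - 2 * (n * Φ) by ring]
    ring
  · ring

theorem window_self_convolution_vanishes_general
    (p Φ b : ℝ) (hΦ0 : 0 < Φ)
    (hb1 : 2 * Φ < |b|) (hb2 : |b| ≤ π) :
    (p * Φ / π) ^ 2
      + 2 * ∑' n : ℕ, (p * Real.sin ((n + 1) * Φ) / (π * ((n : ℝ) + 1))) ^ 2
          * Real.cos ((n + 1) * b) = 0 := by
  have hsum : HasSum (fun n : ℕ => sin (((n : ℝ) + 1) * Φ) ^ 2
      * cos (((n : ℝ) + 1) * |b|) / ((n : ℝ) + 1) ^ 2) (-(Φ ^ 2 / 2)) := by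
    simpa using (hasSum_nat_add_iff' 1).mpr
      (hasSum_sin_sq_mul_cos_nat_mul_div_sq hΦ0.le hb1.le (by linarith))
  have hterm : ∀ n : ℕ, (p * sin ((n + 1) * Φ) / (π * ((n : ℝ) + 1))) ^ 2 * cos ((n + 1) * b)
      = (p / π) ^ 2 * (sin (((n : ℝ) + 1) * Φ) ^ 2 * cos (((n : ℝ) + 1) * |b|)
        / ((n : ℝ) + 1) ^ 2) := by
    intro n
    rw [← cos_abs (_ * b), abs_mul, abs_of_pos (by positivity : (0 : ℝ) < n + 1)]
    field_simp
  simp only [hterm, tsum_mul_left, hsum.tsum_eq]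
  field_simp
  ring

/-- The Fourier series of the self-convolution of the window function vanishes outside
its support: for `Φ ∈ (0, π/2]` and `2Φ < |b| ≤ π`,
`(pΦ/π)² + 2∑_{n≥1} (p sin(nΦ)/(πn))² cos(nb) = 0`. -/
theorem window_self_convolution_vanishes
    (p Φ b : ℝ) (hp0 : 0 ≤ p) (hp1 : p ≤ 1) (hΦ0 : 0 < Φ) (hΦ : Φ ≤ π / 2)
    (hb1 : 2 * Φ < |b|) (hb2 : |b| ≤ π) :
    (p * Φ / π) ^ 2
      + 2 * ∑' n : ℕ, (p * Real.sin ((n + 1) * Φ) / (π * ((n : ℝ) + 1))) ^ 2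
          * Real.cos ((n + 1) * b) = 0 :=
  window_self_convolution_vanishes_general p Φ b hΦ0 hb1 hb2
end
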